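/- In the selection model X = UX, Y = α·X + UY, V1 = β·X + γ·Y + U1 with UX, UY, U1 independent standard normals, the conditional expectation E[Y | X = x, V1 = v1] equals (γ·v1 + (α − βγ)·x)/(1+γ²); hence the association A(x, v1) := ∂/∂x E[Y | X=x, V1=v1] equals (α − βγ)/(1+γ²). -/

import Mathlib

open MeasureTheory ProbabilityTheory Real

/-- Standard normal density. -/
noncomputable def phi (u : ℝ) : ℝ := gaussianPDFReal 0 1 u

lemma odd_gauss_int {b : ℝ} (hb : 0 < b) : ∫ x : ℝ, x * rexp (-b * x ^ 2) = 0 := by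
  have h := integral_neg_eq_self (fun x : ℝ => x * rexp (-b * x ^ 2)) (volume : Measure ℝ)
  have h2 : (∫ x : ℝ, (-x) * rexp (-b * (-x) ^ 2)) = - ∫ x : ℝ, x * rexp (-b * x ^ 2) := by
    rw [← integral_neg]
    congr 1; funext x; ring_nf
  rw [h2] at h
  linarith

lemma gauss_shift {b : ℝ} (hb : 0 < b) (m : ℝ) :
    ∫ w : ℝ, rexp (-b * (w - m) ^ 2) = Real.sqrt (π / b) := by
  rw [integral_sub_right_eq_self (fun w : ℝ => rexp (-b * w ^ 2)) m]
  exact integral_gaussian b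

lemma gauss_lin {b : ℝ} (hb : 0 < b) (m a : ℝ) :
    ∫ w : ℝ, (a + w) * rexp (-b * (w - m) ^ 2) = (a + m) * Real.sqrt (π / b) := by
  have key : ∫ w : ℝ, (a + w) * rexp (-b * (w - m) ^ 2)
      = ∫ u : ℝ, (a + m + u) * rexp (-b * u ^ 2) := by
    rw [← integral_sub_right_eq_self (fun u : ℝ => (a + m + u) * rexp (-b * u ^ 2)) m]
    congr 1; funext w; ring_nf
  rw [key]
  have hsplit : ∀ u : ℝ, (a + m + u) * rexp (-b * u ^ 2)
      = (a + m) * rexp (-b * u ^ 2) + u * rexp (-b * u ^ 2) := fun u => by ring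
  simp_rw [hsplit]
  rw [integral_add ((integrable_exp_neg_mul_sq hb).const_mul _) (integrable_mul_exp_neg_mul_sq hb),
    integral_const_mul, integral_gaussian, odd_gauss_int hb, add_zero]

lemma ratio_eq (α β γ y v1 : ℝ) :
    (∫ w : ℝ, (α * y + w) * (phi w * phi (v1 - (β + γ * α) * y - γ * w))) /
        (∫ w : ℝ, phi w * phi (v1 - (β + γ * α) * y - γ * w))
      = (γ * v1 + (α - β * γ) * y) / (1 + γ ^ 2) := by
  set c : ℝ := v1 - (β + γ * α) * y with hc
  have hg : (0 : ℝ) < 1 + γ ^ 2 := by positivity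
  set b : ℝ := (1 + γ ^ 2) / 2 with hb
  have hbpos : 0 < b := by positivity
  set m : ℝ := γ * c / (1 + γ ^ 2) with hm
  set C : ℝ := (2 * π)⁻¹ * rexp (-c ^ 2 / (2 * (1 + γ ^ 2))) with hC
  have hCpos : 0 < C := by
    apply mul_pos (inv_pos.mpr (by positivity)) (exp_pos _)
  -- pointwise identity
  have hpt : ∀ w : ℝ, phi w * phi (c - γ * w) = C * rexp (-b * (w - m) ^ 2) := by
    intro w
    simp only [phi, gaussianPDFReal, NNReal.coe_one, mul_one]
    have hinv : (Real.sqrt (2 * π))⁻¹ * (Real.sqrt (2 * π))⁻¹ = (2 * π)⁻¹ := by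
      rw [← mul_inv, Real.mul_self_sqrt (by positivity : (0:ℝ) ≤ 2 * π)]
    rw [mul_mul_mul_comm, ← Real.exp_add, hinv, hC, mul_assoc, ← Real.exp_add]
    congr 1
    rw [hb, hm]
    congr 1
    field_simp
    ring
  have hD : (∫ w : ℝ, phi w * phi (c - γ * w)) = C * Real.sqrt (π / b) := by
    simp_rw [hpt]
    rw [integral_const_mul, gauss_shift hbpos]
  have hN : (∫ w : ℝ, (α * y + w) * (phi w * phi (c - γ * w)))
      = C * ((α * y + m) * Real.sqrt (π / b)) := by
    have : ∀ w : ℝ, (α * y + w) * (phi w * phi (c - γ * w))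
        = C * ((α * y + w) * rexp (-b * (w - m) ^ 2)) := by
      intro w; rw [hpt w]; ring
    simp_rw [this]
    rw [integral_const_mul, gauss_lin hbpos]
  have hsq : Real.sqrt (π / b) ≠ 0 := by
    apply Real.sqrt_ne_zero'.mpr; positivity
  have hred : (C * ((α * y + m) * Real.sqrt (π / b))) / (C * Real.sqrt (π / b))
      = α * y + m := by
    rw [mul_div_mul_left _ _ hCpos.ne', mul_div_assoc, div_self hsq, mul_one]
  rw [hN, hD, hred, hm, hc]
  field_simp
  ring

/-- Selection model `X = UX`, `Y = α X + UY`, `V1 = β X + γ Y + U1`: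
`E[Y | X = x, V1 = v1] = (γ v1 + (α - βγ) x)/(1+γ²)`, hence the association
`A(x, v1) = ∂/∂x E[Y | X = x, V1 = v1] = (α - βγ)/(1+γ²)`.  The conditional
density of `UY` given `X = x, V1 = v1` is proportional to
`φ(w) φ(v1 - (β+γα)x - γ w)` and `Y = α x + UY`. -/
theorem selection_association (α β γ x v1 : ℝ) :
    (∫ w : ℝ, (α * x + w) * (phi w * phi (v1 - (β + γ * α) * x - γ * w))) /
        (∫ w : ℝ, phi w * phi (v1 - (β + γ * α) * x - γ * w))
      = (γ * v1 + (α - β * γ) * x) / (1 + γ ^ 2) ∧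
    HasDerivAt (fun y : ℝ =>
      (∫ w : ℝ, (α * y + w) * (phi w * phi (v1 - (β + γ * α) * y - γ * w))) /
        (∫ w : ℝ, phi w * phi (v1 - (β + γ * α) * y - γ * w)))
      ((α - β * γ) / (1 + γ ^ 2)) x := by
  have hg : (0 : ℝ) < 1 + γ ^ 2 := by positivity
  refine ⟨ratio_eq α β γ x v1, ?_⟩
  have hfun : (fun y : ℝ =>
      (∫ w : ℝ, (α * y + w) * (phi w * phi (v1 - (β + γ * α) * y - γ * w))) /
        (∫ w : ℝ, phi w * phi (v1 - (β + γ * α) * y - γ * w)))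
      = fun y : ℝ => γ * v1 / (1 + γ ^ 2) + (α - β * γ) / (1 + γ ^ 2) * y := by
    funext y
    rw [ratio_eq α β γ y v1]
    ring
  rw [hfun]
  have h1 : HasDerivAt (fun y : ℝ => (α - β * γ) / (1 + γ ^ 2) * y)
      ((α - β * γ) / (1 + γ ^ 2)) x := by
    simpa using (hasDerivAt_id x).const_mul ((α - β * γ) / (1 + γ ^ 2))
  simpa using h1.const_add (γ * v1 / (1 + γ ^ 2))
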